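/- Let X̂ be the Alexandroff strict compactification of a weakly normal gts X with X_top locally compact Hausdorff and non-compact. Then the extension operator Ex_{X̂} is finitely additive (i.e., {Ex_{X̂}(U) : U ∈ Op_X} is stable under finite unions) if and only if for every pair A, B of disjoint closed sets of X, at least one of A, B is topologically compact. -/

import Mathlib

open Set TopologicalSpace Topology

universe u

/-- A generalized topology in the sense of Delfs–Knebusch (axioms following
Piękosz, Definition 2.2.1): `Cov` is the collection of admissible open families,
and the open sets are the members of `⋃₀ Cov`. -/
structure GenTop (X : Type u) : Type u where
  Cov : Set (Set (Set X))
  univ_open : Set.univ ∈ ⋃₀ Cov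
  finite_admissible : ∀ 𝒰 : Set (Set X), 𝒰.Finite → 𝒰 ⊆ ⋃₀ Cov → 𝒰 ∈ Cov
  union_open : ∀ 𝒰 ∈ Cov, ⋃₀ 𝒰 ∈ ⋃₀ Cov
  restrict : ∀ 𝒰 ∈ Cov, ∀ V ∈ ⋃₀ Cov, (fun U => V ∩ U) '' 𝒰 ∈ Cov
  transitive : ∀ 𝒰 ∈ Cov, ∀ f : Set X → Set (Set X),
    (∀ U ∈ 𝒰, f U ∈ Cov ∧ ⋃₀ f U = U) → {V : Set X | ∃ U ∈ 𝒰, V ∈ f U} ∈ Cov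
  coarsen : ∀ 𝒰 ∈ Cov, ∀ 𝒱 ⊆ ⋃₀ Cov, (∀ U ∈ 𝒰, ∃ V ∈ 𝒱, U ⊆ V) →
    ⋃₀ 𝒱 = ⋃₀ 𝒰 → 𝒱 ∈ Cov
  regular : ∀ 𝒰 ∈ Cov, ∀ W ⊆ ⋃₀ 𝒰, (∀ U ∈ 𝒰, W ∩ U ∈ ⋃₀ Cov) → W ∈ ⋃₀ Cov

namespace GenTop

variable {X : Type u} (G : GenTop X)

/-- The open sets of a gts. -/
def Opens : Set (Set X) := ⋃₀ G.Cov

/-- The closed sets of a gts. -/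
def Closeds : Set (Set X) := {A : Set X | Aᶜ ∈ G.Opens}

/-- The topologization of a gts: the topology generated by the open sets. -/
def topol : TopologicalSpace X := TopologicalSpace.generateFrom G.Opens

/-- A gts is weakly normal if disjoint sets, each a singleton or closed,
can be separated by disjoint open sets. -/
def WeaklyNormal : Prop :=
  ∀ A₁ A₂ : Set X, ((∃ x, A₁ = {x}) ∨ A₁ ∈ G.Closeds) →
    ((∃ x, A₂ = {x}) ∨ A₂ ∈ G.Closeds) → Disjoint A₁ A₂ →
    ∃ W₁ ∈ G.Opens, ∃ W₂ ∈ G.Opens, Disjoint W₁ W₂ ∧ A₁ ⊆ W₁ ∧ A₂ ⊆ W₂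

end GenTop

/-- The topologization of the Alexandroff strict compactification `X̂ = X ∪ {∞}`
(realized as `Option X` with `∞ = none`): generated by the opens of `X` and the
complements of topologically compact closed sets of `X`. -/
def hatTop {X : Type u} (G : GenTop X) : TopologicalSpace (Option X) :=
  TopologicalSpace.generateFrom
    ({W : Set (Option X) | ∃ U ∈ G.Opens, W = some '' U} ∪
     {W : Set (Option X) | ∃ C ∈ G.Closeds, @IsCompact X G.topol C ∧ W = (some '' C)ᶜ})

/-- The extension operator of the Alexandroff strict compactification:
`Ex_{X̂}(U) = X̂ ∖ cl_{X̂_top}(X ∖ U)`. -/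
def ExHat {X : Type u} (G : GenTop X) (U : Set X) : Set (Option X) :=
  (@closure _ (hatTop G) (some '' Uᶜ))ᶜ

/-! The points of `X` lie in `Ex(U)` exactly when they lie in `U`, and `∞ ∈ Ex(U)` exactly when
`X ∖ U` is compact. Hence `Ex(U) ∪ Ex(V) = Ex(W)` forces `W = U ∪ V`, and additivity amounts to:
if `(X ∖ U) ∩ (X ∖ V)` is compact, then so is `X ∖ U` or `X ∖ V`. This fails for complements of
disjoint non-compact closed sets. Conversely, by local compactness the compact set
`K = (X ∖ U) ∩ (X ∖ V)` lies in an open `O` inside a compact `L`; the closed sets `(X ∖ U) ∖ O` and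
`(X ∖ V) ∖ O` are disjoint, so one of them is compact, and adding `L` to it covers `X ∖ U` or
`X ∖ V`. -/

namespace GenTop

variable {X : Type u} (G : GenTop X)

lemma sUnion_mem_opens {𝒰 : Set (Set X)} (hfin : 𝒰.Finite) (h : 𝒰 ⊆ G.Opens) :
    ⋃₀ 𝒰 ∈ G.Opens :=
  G.union_open 𝒰 (G.finite_admissible 𝒰 hfin h)

lemma biUnion_mem_opens {ι : Type*} {t : Set ι} (ht : t.Finite) {f : ι → Set X}
    (h : ∀ i ∈ t, f i ∈ G.Opens) : ⋃ i ∈ t, f i ∈ G.Opens := by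
  rw [← sUnion_image]
  exact G.sUnion_mem_opens (ht.image f) (forall_mem_image.2 h)

lemma union_mem_opens {U V : Set X} (hU : U ∈ G.Opens) (hV : V ∈ G.Opens) :
    U ∪ V ∈ G.Opens := by
  simpa using G.sUnion_mem_opens (toFinite {U, V}) (insert_subset hU (singleton_subset_iff.2 hV))

lemma inter_mem_opens {U V : Set X} (hU : U ∈ G.Opens) (hV : V ∈ G.Opens) :
    U ∩ V ∈ G.Opens :=
  ⟨_, G.restrict {V} (G.finite_admissible {V} (finite_singleton V) (singleton_subset_iff.2 hV))
    U hU, V, rfl, rfl⟩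

lemma compl_mem_closeds {U : Set X} (hU : U ∈ G.Opens) : Uᶜ ∈ G.Closeds := by
  simpa [Closeds] using hU

lemma empty_mem_closeds : (∅ : Set X) ∈ G.Closeds := by
  show (∅ : Set X)ᶜ ∈ G.Opens
  rw [compl_empty]
  exact G.univ_open

lemma union_mem_closeds {A B : Set X} (hA : A ∈ G.Closeds) (hB : B ∈ G.Closeds) :
    A ∪ B ∈ G.Closeds := by
  simpa [Closeds, compl_union] using G.inter_mem_opens hA hB

lemma diff_mem_closeds {A U : Set X} (hA : A ∈ G.Closeds) (hU : U ∈ G.Opens) :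
    A \ U ∈ G.Closeds := by
  simpa [Closeds, compl_sdiff] using G.union_mem_opens hU hA

lemma isOpen_of_mem_opens {U : Set X} (hU : U ∈ G.Opens) : IsOpen[G.topol] U :=
  .basic U hU

lemma isClosed_of_mem_closeds {A : Set X} (hA : A ∈ G.Closeds) : IsClosed[G.topol] A :=
  @isOpen_compl_iff X A G.topol |>.1 (G.isOpen_of_mem_opens hA)

lemma isTopologicalBasis_opens : @IsTopologicalBasis X G.topol G.Opens := by
  have h := @isTopologicalBasis_of_subbasis_of_inter X G.topol G.Opens rfl
    fun _ hU _ hV => G.inter_mem_opens hU hV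
  rwa [insert_eq_of_mem (show univ ∈ G.Opens from G.univ_open)] at h

lemma exists_mem_opens_between_isCompact (hlc : @LocallyCompactSpace X G.topol) {K : Set X}
    (hK : @IsCompact X G.topol K) :
    ∃ O ∈ G.Opens, ∃ L, @IsCompact X G.topol L ∧ K ⊆ O ∧ O ⊆ L := by
  let := G.topol
  obtain ⟨L, hL, hKL⟩ := exists_compact_superset hK
  have hbasic : ∀ x ∈ K, ∃ U ∈ G.Opens, x ∈ U ∧ U ⊆ interior L := fun x hx =>
    G.isTopologicalBasis_opens.exists_subset_of_mem_open (hKL hx) isOpen_interior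
  choose U hU hxU hUL using hbasic
  obtain ⟨t, hKt⟩ := hK.elim_nhds_subcover' U fun x hx =>
    (G.isOpen_of_mem_opens (hU x hx)).mem_nhds (hxU x hx)
  exact ⟨_, G.biUnion_mem_opens t.finite_toSet fun x _ => hU x x.2, L, hL, hKt,
    iUnion₂_subset fun x _ => (hUL x x.2).trans interior_subset⟩

lemma isCompact_or_isCompact_of_isCompact_inter (hlc : @LocallyCompactSpace X G.topol)
    (h : ∀ A ∈ G.Closeds, ∀ B ∈ G.Closeds, Disjoint A B →
      @IsCompact X G.topol A ∨ @IsCompact X G.topol B)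
    {A B : Set X} (hA : A ∈ G.Closeds) (hB : B ∈ G.Closeds)
    (hAB : @IsCompact X G.topol (A ∩ B)) :
    @IsCompact X G.topol A ∨ @IsCompact X G.topol B := by
  let := G.topol
  obtain ⟨O, hO, L, hL, hABO, hOL⟩ := G.exists_mem_opens_between_isCompact hlc hAB
  have hdisj : Disjoint (A \ O) (B \ O) :=
    disjoint_left.2 fun x hxA hxB => hxA.2 (hABO ⟨hxA.1, hxB.1⟩)
  have of_diff {C : Set X} (hC : C ∈ G.Closeds) (hCO : IsCompact (C \ O)) : IsCompact C :=
    (hCO.union hL).of_isClosed_subset (G.isClosed_of_mem_closeds hC) fun x hx =>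
      (em (x ∈ O)).elim (fun hxO => Or.inr (hOL hxO)) fun hxO => Or.inl ⟨hx, hxO⟩
  exact (h _ (G.diff_mem_closeds hA hO) _ (G.diff_mem_closeds hB hO) hdisj).imp
    (of_diff hA) (of_diff hB)

end GenTop

section ExHat

variable {X : Type u} (G : GenTop X)

lemma isOpen_hatTop_image {U : Set X} (hU : U ∈ G.Opens) :
    IsOpen[hatTop G] (some '' U) :=
  .basic _ (Or.inl ⟨U, hU, rfl⟩)

lemma isOpen_hatTop_compl_image {C : Set X} (hC : C ∈ G.Closeds)
    (hcpt : @IsCompact X G.topol C) : IsOpen[hatTop G] (some '' C)ᶜ :=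
  .basic _ (Or.inr ⟨C, hC, hcpt, rfl⟩)

lemma exists_compl_image_subset_of_none_mem {t : Set (Option X)} (ht : IsOpen[hatTop G] t)
    (hnone : none ∈ t) :
    ∃ C ∈ G.Closeds, @IsCompact X G.topol C ∧ (some '' C)ᶜ ⊆ t := by
  let := G.topol
  induction ht with
  | basic s hs =>
    rcases hs with ⟨U, -, rfl⟩ | ⟨C, hC, hcpt, rfl⟩
    · simp at hnone
    · exact ⟨C, hC, hcpt, subset_rfl⟩
  | univ => exact ⟨∅, G.empty_mem_closeds, isCompact_empty, subset_univ _⟩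
  | inter s t _ _ ihs iht =>
    obtain ⟨C₁, hC₁, hcpt₁, hsub₁⟩ := ihs hnone.1
    obtain ⟨C₂, hC₂, hcpt₂, hsub₂⟩ := iht hnone.2
    refine ⟨C₁ ∪ C₂, G.union_mem_closeds hC₁ hC₂, hcpt₁.union hcpt₂, ?_⟩
    rw [image_union, compl_union]
    exact inter_subset_inter hsub₁ hsub₂
  | sUnion S _ ih =>
    obtain ⟨s, hsS, hns⟩ := hnone
    obtain ⟨C, hC, hcpt, hsub⟩ := ih s hsS hns
    exact ⟨C, hC, hcpt, hsub.trans (subset_sUnion_of_mem hsS)⟩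

lemma some_mem_exHat {U : Set X} (hU : U ∈ G.Opens) {x : X} :
    some x ∈ ExHat G U ↔ x ∈ U := by
  let := hatTop G
  refine ⟨fun hx => not_not.1 fun hxU => hx (subset_closure ⟨x, hxU, rfl⟩), fun hxU hx => ?_⟩
  have hclosed : IsClosed (some '' U)ᶜ := (isOpen_hatTop_image G hU).isClosed_compl
  exact closure_minimal (image_compl_subset (Option.some_injective X)) hclosed hx ⟨x, hxU, rfl⟩

lemma none_mem_exHat {U : Set X} (hU : U ∈ G.Opens) :
    none ∈ ExHat G U ↔ @IsCompact X G.topol Uᶜ := by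
  let := G.topol
  let := hatTop G
  constructor
  · intro hnone
    obtain ⟨C, -, hC, hsub⟩ :=
      exists_compl_image_subset_of_none_mem G isClosed_closure.isOpen_compl hnone
    have hUC : some '' Uᶜ ⊆ some '' C :=
      compl_subset_compl.1 (hsub.trans (compl_subset_compl.2 subset_closure))
    exact hC.of_isClosed_subset (G.isClosed_of_mem_closeds (G.compl_mem_closeds hU))
      ((image_subset_image_iff (Option.some_injective X)).1 hUC)
  · intro hcpt
    have hclosed : IsClosed (some '' Uᶜ) :=
      isOpen_compl_iff.1 (isOpen_hatTop_compl_image G (G.compl_mem_closeds hU) hcpt)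
    rw [ExHat, hclosed.closure_eq]
    simp

lemma exHat_union_eq_exHat_iff {U V W : Set X} (hU : U ∈ G.Opens) (hV : V ∈ G.Opens)
    (hW : W ∈ G.Opens) :
    ExHat G U ∪ ExHat G V = ExHat G W ↔
      W = U ∪ V ∧
        (@IsCompact X G.topol Wᶜ ↔ @IsCompact X G.topol Uᶜ ∨ @IsCompact X G.topol Vᶜ) := by
  simp only [Set.ext_iff, Option.forall, mem_union, none_mem_exHat G hU, none_mem_exHat G hV,
    none_mem_exHat G hW, some_mem_exHat G hU, some_mem_exHat G hV, some_mem_exHat G hW]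
  exact ⟨fun ⟨hnone, hsome⟩ => ⟨fun x => (hsome x).symm, hnone.symm⟩,
    fun ⟨hsome, hnone⟩ => ⟨hnone.symm, fun x => (hsome x).symm⟩⟩

end ExHat

theorem stmt_16_general {X : Type u} (G : GenTop X)
    (hlc : @LocallyCompactSpace X G.topol) :
    (∀ U ∈ G.Opens, ∀ V ∈ G.Opens, ∃ W ∈ G.Opens,
        ExHat G U ∪ ExHat G V = ExHat G W) ↔
      (∀ A ∈ G.Closeds, ∀ B ∈ G.Closeds, Disjoint A B →
        @IsCompact X G.topol A ∨ @IsCompact X G.topol B) := by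
  let := G.topol
  constructor
  · intro h A hA B hB hAB
    obtain ⟨W, hW, hEq⟩ := h Aᶜ hA Bᶜ hB
    obtain ⟨rfl, hcpt⟩ := (exHat_union_eq_exHat_iff G hA hB hW).1 hEq
    rw [← compl_inter, hAB.inter_eq, compl_empty, compl_univ, compl_compl, compl_compl] at hcpt
    exact hcpt.1 isCompact_empty
  · intro h U hU V hV
    refine ⟨U ∪ V, G.union_mem_opens hU hV,
      (exHat_union_eq_exHat_iff G hU hV (G.union_mem_opens hU hV)).2 ⟨rfl, ?_, ?_⟩⟩
    · rw [compl_union]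
      exact G.isCompact_or_isCompact_of_isCompact_inter hlc h (G.compl_mem_closeds hU)
        (G.compl_mem_closeds hV)
    · have hclosed : IsClosed (U ∪ V)ᶜ :=
        (G.isOpen_of_mem_opens (G.union_mem_opens hU hV)).isClosed_compl
      rintro (hc | hc) <;> refine hc.of_isClosed_subset hclosed (compl_subset_compl.2 ?_)
      exacts [subset_union_left, subset_union_right]

/-- For the Alexandroff strict compactification of a weakly normal gts with
locally compact Hausdorff non-compact topologization, the extension operator is
finitely additive iff of any two disjoint closed sets at least one is
topologically compact. -/
theorem stmt_16 {X : Type u} (G : GenTop X) (hwn : G.WeaklyNormal)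
    (hlc : @LocallyCompactSpace X G.topol) (h2 : @T2Space X G.topol)
    (hnc : ¬ @CompactSpace X G.topol) :
    (∀ U ∈ G.Opens, ∀ V ∈ G.Opens, ∃ W ∈ G.Opens,
        ExHat G U ∪ ExHat G V = ExHat G W) ↔
      (∀ A ∈ G.Closeds, ∀ B ∈ G.Closeds, Disjoint A B →
        @IsCompact X G.topol A ∨ @IsCompact X G.topol B) :=
  stmt_16_general G hlc
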